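/- arXiv:2103.02681 — 5 statements merged into one kernel-verified Lean document; each statement's English description precedes it below -/
import Mathlib

section
/- Let ε > 0 and λ > 0 with √λ ≤ ε. Then for every z ∈ [0, λ/ε], the function q_{λ,z}(x) = (1/(2λ))(x − z)² + log(1 + |x|/ε) is increasing on [0, ∞); and for every z ∈ [λ/ε, ∞), q_{λ,z} is decreasing on [0, r₂(z)] and increasing on [r₂(z), ∞). -/
open Real Filter

/-- The scalar log-sum penalty `g(w) = log(1 + |w|/ε)`. -/
noncomputable def logpen (ε : ℝ) (w : ℝ) : ℝ := Real.log (1 + |w| / ε)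

/-- The objective `q_{λ,z}(x) = (1/(2λ))(x − z)² + g(x)`. -/
noncomputable def qfun (lam ε z x : ℝ) : ℝ :=
  1 / (2 * lam) * (x - z) ^ 2 + logpen ε x

/-- The proximity operator of `λ g` at `z`: the set of global minimizers of `q_{λ,z}`. -/
def prox (lam ε z : ℝ) : Set ℝ := {x | ∀ y : ℝ, qfun lam ε z x ≤ qfun lam ε z y}

/-- `r₁(z) = (z − ε)/2 − √((z + ε)²/4 − λ)`. -/
noncomputable def r1 (lam ε z : ℝ) : ℝ :=
  (z - ε) / 2 - Real.sqrt ((z + ε) ^ 2 / 4 - lam)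

/-- `r₂(z) = (z − ε)/2 + √((z + ε)²/4 − λ)`. -/
noncomputable def r2 (lam ε z : ℝ) : ℝ :=
  (z - ε) / 2 + Real.sqrt ((z + ε) ^ 2 / 4 - lam)

/-- `r(z) = q_{λ,z}(r₂(z)) − q_{λ,z}(0)`. -/
noncomputable def rfun (lam ε z : ℝ) : ℝ :=
  qfun lam ε z (r2 lam ε z) - qfun lam ε z 0

/-- The iteratively reweighted ℓ₁ iteration for `prox_{λ g}(z)`. -/
def IterRW (lam ε z : ℝ) (x : ℕ → ℝ) : Prop :=
  ∀ k : ℕ, x (k + 1) =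
    if |z| ≤ lam / (ε + |x k|) then 0
    else Real.sign z * (|z| - lam / (ε + |x k|))

/-
For `x > 0` one has `q'(x) = ((x - z)(ε + x) + λ) / (λ (ε + x))`, so the sign of `q'` on `(0, ∞)` is
that of the quadratic `x² + (ε - z) x + (λ - ε z)`. If `z ≤ λ/ε` then also `z ≤ ε` (as `λ ≤ ε²`), so all
its coefficients are nonnegative and `q` increases. If `z ≥ λ/ε`, the quadratic has the real roots
`r₁(z) ≤ 0 ≤ r₂(z)` (their product is `λ - ε z ≤ 0`), so `q` decreases on `[0, r₂(z)]` and increases after.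
-/

section

variable {lam ε z : ℝ}

lemma continuous_qfun (hε : 0 < ε) : Continuous (qfun lam ε z) := by
  unfold qfun logpen
  have hpos : ∀ x : ℝ, 1 + |x| / ε ≠ 0 := fun x => by positivity
  fun_prop (disch := exact hpos _)

lemma hasDerivAt_qfun (hε : 0 < ε) (hlam : lam ≠ 0) {x : ℝ} (hx : 0 < x) :
    HasDerivAt (qfun lam ε z) (((x - z) * (ε + x) + lam) / (lam * (ε + x))) x := by
  have hquad : HasDerivAt (fun y : ℝ => 1 / (2 * lam) * (y - z) ^ 2) ((x - z) / lam) x := by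
    refine ((((hasDerivAt_id' x).sub_const z).pow 2).const_mul (1 / (2 * lam))).congr_deriv ?_
    field_simp
    ring
  have hlog : HasDerivAt (fun y : ℝ => Real.log (1 + y / ε)) (1 / (ε + x)) x := by
    refine ((((hasDerivAt_id' x).div_const ε).const_add 1).log (by positivity)).congr_deriv ?_
    field_simp
  have hsum : HasDerivAt (qfun lam ε z) ((x - z) / lam + 1 / (ε + x)) x := by
    refine (hquad.add hlog).congr_of_eventuallyEq ?_
    filter_upwards [eventually_gt_nhds hx] with y hy
    simp only [qfun, logpen, abs_of_pos hy, Pi.add_apply]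
  convert hsum using 1
  field_simp

lemma qfun_strictMonoOn_of_pos {D : Set ℝ} (hD : Convex ℝ D) (hε : 0 < ε) (hlam : 0 < lam)
    (hD₀ : interior D ⊆ Set.Ioi 0) (hpos : ∀ x ∈ interior D, 0 < (x - z) * (ε + x) + lam) :
    StrictMonoOn (qfun lam ε z) D := by
  refine strictMonoOn_of_hasDerivWithinAt_pos hD (continuous_qfun hε).continuousOn
    (fun x hx => (hasDerivAt_qfun hε hlam.ne' (hD₀ hx)).hasDerivWithinAt) fun x hx => ?_
  have hx₀ : 0 < x := hD₀ hx
  exact div_pos (hpos x hx) (by positivity)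

lemma qfun_strictAntiOn_of_neg {D : Set ℝ} (hD : Convex ℝ D) (hε : 0 < ε) (hlam : 0 < lam)
    (hD₀ : interior D ⊆ Set.Ioi 0) (hneg : ∀ x ∈ interior D, (x - z) * (ε + x) + lam < 0) :
    StrictAntiOn (qfun lam ε z) D := by
  refine strictAntiOn_of_hasDerivWithinAt_neg hD (continuous_qfun hε).continuousOn
    (fun x hx => (hasDerivAt_qfun hε hlam.ne' (hD₀ hx)).hasDerivWithinAt) fun x hx => ?_
  have hx₀ : 0 < x := hD₀ hx
  exact div_neg_of_neg_of_pos (hneg x hx) (by positivity)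

lemma qfun_strictMonoOn_Ici_zero (hε : 0 < ε) (hlam : 0 < lam) (hzε : z ≤ ε)
    (hz : ε * z ≤ lam) : StrictMonoOn (qfun lam ε z) (Set.Ici 0) := by
  refine qfun_strictMonoOn_of_pos (convex_Ici 0) hε hlam (interior_Ici).subset fun x hx => ?_
  rw [interior_Ici, Set.mem_Ioi] at hx
  nlinarith [mul_nonneg hx.le (sub_nonneg.2 hzε)]

lemma sub_r1_mul_sub_r2 (hdisc : 0 ≤ (z + ε) ^ 2 / 4 - lam) (x : ℝ) :
    (x - r1 lam ε z) * (x - r2 lam ε z) = (x - z) * (ε + x) + lam := by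
  have hsq := Real.sq_sqrt hdisc
  simp only [r1, r2]
  linear_combination (-1 : ℝ) * hsq

lemma disc_nonneg_of_le_mul (hz : lam ≤ ε * z) : 0 ≤ (z + ε) ^ 2 / 4 - lam := by
  nlinarith [sq_nonneg (z - ε)]

lemma abs_sub_div_two_le_sqrt (hz : lam ≤ ε * z) :
    |(z - ε) / 2| ≤ Real.sqrt ((z + ε) ^ 2 / 4 - lam) :=
  Real.abs_le_sqrt (by linarith)

lemma r1_nonpos (hz : lam ≤ ε * z) : r1 lam ε z ≤ 0 := by
  have := (abs_le.1 (abs_sub_div_two_le_sqrt hz)).2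
  simp only [r1]
  linarith

lemma r2_nonneg (hz : lam ≤ ε * z) : 0 ≤ r2 lam ε z := by
  have := (abs_le.1 (abs_sub_div_two_le_sqrt hz)).1
  simp only [r2]
  linarith

lemma qfun_strictAntiOn_Icc_r2 (hε : 0 < ε) (hlam : 0 < lam) (hz : lam ≤ ε * z) :
    StrictAntiOn (qfun lam ε z) (Set.Icc 0 (r2 lam ε z)) := by
  refine qfun_strictAntiOn_of_neg (convex_Icc _ _) hε hlam
    (interior_Icc.subset.trans Set.Ioo_subset_Ioi_self) fun x hx => ?_
  rw [interior_Icc] at hx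
  rw [← sub_r1_mul_sub_r2 (disc_nonneg_of_le_mul hz) x]
  exact mul_neg_of_pos_of_neg (by linarith [r1_nonpos hz, hx.1]) (by linarith [hx.2])

lemma qfun_strictMonoOn_Ici_r2 (hε : 0 < ε) (hlam : 0 < lam) (hz : lam ≤ ε * z) :
    StrictMonoOn (qfun lam ε z) (Set.Ici (r2 lam ε z)) := by
  have hr2 := r2_nonneg hz
  refine qfun_strictMonoOn_of_pos (convex_Ici _) hε hlam
    (fun x hx => by rw [interior_Ici] at hx; exact hr2.trans_lt hx) fun x hx => ?_
  rw [interior_Ici, Set.mem_Ioi] at hx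
  rw [← sub_r1_mul_sub_r2 (disc_nonneg_of_le_mul hz) x]
  exact mul_pos (by linarith [r1_nonpos hz]) (by linarith)

end

/-- monotonicity of `q_{λ,z}` when `√λ ≤ ε`. -/
theorem qfun_monotonicity_sqrt_le (ε lam : ℝ) (hε : 0 < ε) (hlam : 0 < lam)
    (h : Real.sqrt lam ≤ ε) :
    (∀ z ∈ Set.Icc (0 : ℝ) (lam / ε), StrictMonoOn (qfun lam ε z) (Set.Ici 0)) ∧
    (∀ z ∈ Set.Ici (lam / ε),
      StrictAntiOn (qfun lam ε z) (Set.Icc 0 (r2 lam ε z)) ∧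
      StrictMonoOn (qfun lam ε z) (Set.Ici (r2 lam ε z))) := by
  have hlam_le : lam ≤ ε ^ 2 := (Real.sqrt_le_left hε.le).1 h
  refine ⟨fun z hz => ?_, fun z hz => ?_⟩
  · have hεz : ε * z ≤ lam := by rw [mul_comm, ← le_div_iff₀ hε]; exact hz.2
    have hzε : z ≤ ε := by nlinarith
    exact qfun_strictMonoOn_Ici_zero hε hlam hzε hεz
  · have hεz : lam ≤ ε * z := by rw [mul_comm, ← div_le_iff₀ hε]; exact hz
    exact ⟨qfun_strictAntiOn_Icc_r2 hε hlam hεz, qfun_strictMonoOn_Ici_r2 hε hlam hεz⟩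
end

section
/- Let ε > 0 and λ > 0. Let 0 ≤ u < v be real numbers. If α ∈ prox_{λg}(u) and β ∈ prox_{λg}(v), then 0 ≤ α ≤ β. -/
/-!
Comparing the optimality of `α` for `u` against `β`, and of `β` for `v` against `α`, the
penalty terms cancel and what remains is `(v - u)(α - β) ≤ 0`; this works for any penalty.
Nonnegativity uses only that the penalty is even and minimal at `0`: for `u > 0` the reflection
`-α` of a negative `α` is strictly closer to `u`, and for `u = 0` the point `0` beats any `α ≠ 0`.
-/

open Real Filter

section QuadraticPlusPenalty

variable {c u v α β : ℝ} {g : ℝ → ℝ}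

theorem minimizer_le_of_lt (hc : 0 < c) (huv : u < v)
    (hα : ∀ y, c * (α - u) ^ 2 + g α ≤ c * (y - u) ^ 2 + g y)
    (hβ : ∀ y, c * (β - v) ^ 2 + g β ≤ c * (y - v) ^ 2 + g y) :
    α ≤ β := by
  have hsum : c * ((v - u) * (α - β)) ≤ 0 := by
    nlinarith [hα β, hβ α]
  by_contra! hlt
  nlinarith [mul_pos hc (mul_pos (sub_pos.mpr huv) (sub_pos.mpr hlt))]

theorem minimizer_nonneg_of_even (hc : 0 < c) (heven : ∀ x, g (-x) = g x)
    (hmin : ∀ x, g 0 ≤ g x) (hu : 0 ≤ u)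
    (hα : ∀ y, c * (α - u) ^ 2 + g α ≤ c * (y - u) ^ 2 + g y) :
    0 ≤ α := by
  by_contra! hneg
  rcases hu.lt_or_eq with hu_pos | rfl
  · have hreflect := hα (-α)
    rw [heven] at hreflect
    nlinarith [mul_pos hc (mul_pos hu_pos (neg_pos.mpr hneg))]
  · have hzero := hα 0
    nlinarith [hmin α, mul_pos hc (mul_pos (neg_pos.mpr hneg) (neg_pos.mpr hneg))]

end QuadraticPlusPenalty

theorem logpen_neg (ε x : ℝ) : logpen ε (-x) = logpen ε x := by
  rw [logpen, logpen, abs_neg]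

theorem logpen_zero_le {ε : ℝ} (hε : 0 ≤ ε) (x : ℝ) : logpen ε 0 ≤ logpen ε x := by
  rw [logpen, abs_zero, zero_div, add_zero, Real.log_one]
  exact Real.log_nonneg (le_add_of_nonneg_right (by positivity))

/-- monotonicity of the proximity operator. -/
theorem prox_monotone (ε lam u v α β : ℝ) (hε : 0 < ε) (hlam : 0 < lam)
    (hu : 0 ≤ u) (huv : u < v)
    (hα : α ∈ prox lam ε u) (hβ : β ∈ prox lam ε v) :
    0 ≤ α ∧ α ≤ β := by
  have hc : 0 < 1 / (2 * lam) := by positivity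
  exact ⟨minimizer_nonneg_of_even hc (logpen_neg ε) (logpen_zero_le hε.le) hu hα,
    minimizer_le_of_lt hc huv hα hβ⟩
end

section
/- Let ε > 0, λ > 0, z > 0, and let the sequence (x^{(k)})_{k≥0} be generated by the reweighted ℓ₁ iteration from an initial guess x^{(0)} ≥ 0. Suppose x^{(k)} > 0 for all k ≥ 1. Then: if x^{(1)} > x^{(0)}, the sequence (x^{(k)}) is strictly increasing; if x^{(1)} < x^{(0)}, it is strictly decreasing; and if x^{(1)} = x^{(0)}, it is constant. -/
open Real Filter

/-!
Since `z > 0` and every iterate after the first is positive, the thresholding branch never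
fires, so the iteration is `x ↦ z - λ / (ε + x)`, a strictly increasing map on `(-ε, ∞)`.
A sequence generated by a strictly increasing map keeps the direction of its first step.
-/

section Recurrence

variable {α : Type*} {f : α → α} {x : ℕ → α}

theorem StrictMonoOn.strictMono_of_recurrence [Preorder α] {s : Set α} (hf : StrictMonoOn f s)
    (hs : ∀ k, x k ∈ s) (hx : ∀ k, x (k + 1) = f (x k)) (h01 : x 0 < x 1) : StrictMono x := by
  refine strictMono_nat_of_lt_succ fun k => ?_
  induction k with
  | zero => exact h01
  | succ k ih =>
    rw [hx k, hx (k + 1)]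
    exact hf (hs k) (hs (k + 1)) ih

theorem StrictMonoOn.strictAnti_of_recurrence [Preorder α] {s : Set α} (hf : StrictMonoOn f s)
    (hs : ∀ k, x k ∈ s) (hx : ∀ k, x (k + 1) = f (x k)) (h10 : x 1 < x 0) : StrictAnti x :=
  strictMono_toDual_comp_iff.mp <| hf.dual.strictMono_of_recurrence hs hx h10

theorem eq_initial_of_recurrence_of_one_eq (hx : ∀ k, x (k + 1) = f (x k)) (h10 : x 1 = x 0) :
    ∀ k, x k = x 0
  | 0 => rfl
  | k + 1 => by rw [hx, eq_initial_of_recurrence_of_one_eq hx h10 k, ← hx 0, h10]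

end Recurrence

theorem strictMonoOn_sub_div_add {lam ε : ℝ} (z : ℝ) (hlam : 0 < lam) :
    StrictMonoOn (fun a => z - lam / (ε + a)) (Set.Ioi (-ε)) := by
  intro a ha b _ hab
  have hεa : 0 < ε + a := by linarith [Set.mem_Ioi.mp ha]
  exact sub_lt_sub_left (div_lt_div_of_pos_left hlam hεa (by linarith)) z

theorem IterRW.succ_eq_of_pos {lam ε z : ℝ} {x : ℕ → ℝ} (hiter : IterRW lam ε z x) (hz : 0 < z)
    {k : ℕ} (hk : 0 ≤ x k) (hk1 : 0 < x (k + 1)) : x (k + 1) = z - lam / (ε + x k) := by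
  have h := hiter k
  rw [abs_of_nonneg hk, abs_of_pos hz, Real.sign_of_pos hz, one_mul] at h
  split_ifs at h
  · exact absurd h hk1.ne'
  · exact h

/-- monotonicity of the reweighted ℓ₁ sequence with positive iterates. -/
theorem iterRW_monotone (ε lam z : ℝ) (hε : 0 < ε) (hlam : 0 < lam) (hz : 0 < z)
    (x : ℕ → ℝ) (hx0 : 0 ≤ x 0) (hiter : IterRW lam ε z x)
    (hpos : ∀ k : ℕ, 1 ≤ k → 0 < x k) :
    (x 0 < x 1 → StrictMono x) ∧
    (x 1 < x 0 → StrictAnti x) ∧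
    (x 1 = x 0 → ∀ k : ℕ, x k = x 0) := by
  have hnonneg : ∀ k, 0 ≤ x k
    | 0 => hx0
    | k + 1 => (hpos (k + 1) k.succ_pos).le
  have hrec : ∀ k, x (k + 1) = z - lam / (ε + x k) := fun k =>
    hiter.succ_eq_of_pos hz (hnonneg k) (hpos (k + 1) k.succ_pos)
  have hdom : ∀ k, x k ∈ Set.Ioi (-ε) := fun k => by
    simp only [Set.mem_Ioi]
    linarith [hnonneg k]
  have hmono := strictMonoOn_sub_div_add (ε := ε) z hlam
  exact ⟨hmono.strictMono_of_recurrence hdom hrec, hmono.strictAnti_of_recurrence hdom hrec,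
    eq_initial_of_recurrence_of_one_eq (f := fun a => z - lam / (ε + a)) hrec⟩
end

section
/- Let ε > 0, λ > 0, z ≥ 0, and let the sequence (x^{(k)})_{k≥0} be generated by the reweighted ℓ₁ iteration from an initial guess x^{(0)} ≥ 0. If there exists k₀ ≥ 0 with x^{(k₀)} = 0, then (x^{(k)}) converges: its limit is 0 if z ≤ λ/ε, and its limit is r₂(z) = (z − ε)/2 + √((z + ε)²/4 − λ) if z > λ/ε. -/
/-!
Once an iterate vanishes the iteration is the orbit of `0` under
`t ↦ max 0 (z - λ / (ε + |t|))`. If `z ≤ λ/ε`, then `0` is a fixed point. Otherwise this map is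
increasing on `[0, r₂(z)]` and fixes `r₂(z)`, so the orbit increases to a fixed point in that
interval; the fixed points `t > 0` solve `(z - t)(ε + t) = λ`, whose only nonnegative root
is `r₂(z)` because the product of its two roots is `λ - zε < 0`.
-/

open Real Filter

open Set Function Topology

theorem exists_isFixedPt_tendsto_iterate {α : Type*} [ConditionallyCompleteLinearOrder α]
    [TopologicalSpace α] [OrderTopology α] {f : α → α} {a p : α} (hf : Continuous f)
    (hmono : MonotoneOn f (Icc a p)) (hap : a ≤ p) (ha : a ≤ f a) (hp : f p = p) :
    ∃ L ∈ Icc a p, IsFixedPt f L ∧ Tendsto (fun n ↦ f^[n] a) atTop (𝓝 L) := by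
  have hmaps : MapsTo f (Icc a p) (Icc a p) := fun t ht ↦
    ⟨ha.trans (hmono ⟨le_rfl, hap⟩ ht ht.1), hp ▸ hmono ht ⟨hap, le_rfl⟩ ht.2⟩
  have horbit : ∀ n, f^[n] a ∈ Icc a p := fun n ↦ hmaps.iterate n ⟨le_rfl, hap⟩
  have hstep : ∀ n, f^[n] a ≤ f^[n + 1] a := by
    intro n
    induction n with
    | zero => exact ha
    | succ n ih =>
      rw [iterate_succ_apply' f n, iterate_succ_apply' f (n + 1)]
      exact hmono (horbit n) (horbit (n + 1)) ih
  have hlim := tendsto_atTop_ciSup (monotone_nat_of_le_succ hstep)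
    ⟨p, forall_mem_range.2 fun n ↦ (horbit n).2⟩
  exact ⟨_, isClosed_Icc.mem_of_tendsto hlim (Eventually.of_forall horbit),
    isFixedPt_of_tendsto_iterate hlim hf.continuousAt, hlim⟩

section Roots

variable {lam ε z : ℝ}

theorem abs_sub_div_two_lt_sqrt (h : lam < z * ε) :
    |z - ε| / 2 < √((z + ε) ^ 2 / 4 - lam) := by
  rw [← sqrt_sq (by positivity : 0 ≤ |z - ε| / 2)]
  apply sqrt_lt_sqrt (by positivity)
  nlinarith [sq_abs (z - ε)]

theorem r2_pos (h : lam < z * ε) : 0 < r2 lam ε z := by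
  have := abs_sub_div_two_lt_sqrt h
  have := neg_abs_le (z - ε)
  unfold r2
  linarith

theorem sub_r2_mul_add_r2 (h : lam ≤ (z + ε) ^ 2 / 4) :
    (z - r2 lam ε z) * (ε + r2 lam ε z) = lam := by
  have hs := sq_sqrt (sub_nonneg.2 h)
  unfold r2
  linear_combination -hs

theorem eq_r2_of_sub_mul_add (h : lam < z * ε) {t : ℝ} (ht : 0 ≤ t)
    (hroot : (z - t) * (ε + t) = lam) : t = r2 lam ε z := by
  have hsq := sub_r2_mul_add_r2 (lam := lam) (ε := ε) (z := z) (by nlinarith [sq_nonneg (z - ε)])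
  have hfac : (t - r2 lam ε z) * (t - (z - ε - r2 lam ε z)) = 0 := by
    linear_combination hsq - hroot
  rcases mul_eq_zero.1 hfac with h1 | h1
  · linarith
  · have := abs_sub_div_two_lt_sqrt h
    have := le_abs_self (z - ε)
    unfold r2 at h1
    linarith

end Roots

/-- The reweighted ℓ₁ update for `z ≥ 0`, with `|t|` kept so that it matches `IterRW` for
iterates of either sign. -/
noncomputable def rwStep (lam ε z t : ℝ) : ℝ := max 0 (z - lam / (ε + |t|))

section RwStep

variable {lam ε z : ℝ}

theorem IterRW.eq_rwStep {x : ℕ → ℝ} (hiter : IterRW lam ε z x) (hε : 0 < ε) (hlam : 0 ≤ lam)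
    (hz : 0 ≤ z) (k : ℕ) : x (k + 1) = rwStep lam ε z (x k) := by
  have hw : 0 ≤ lam / (ε + |x k|) := by positivity
  rw [hiter k, rwStep, abs_of_nonneg hz]
  split_ifs with hle
  · exact (max_eq_left (by linarith)).symm
  · rw [sign_of_pos (hw.trans_lt (not_le.1 hle)), one_mul, max_eq_right (by linarith)]

theorem IterRW.eq_iterate_rwStep {x : ℕ → ℝ} (hiter : IterRW lam ε z x) (hε : 0 < ε)
    (hlam : 0 ≤ lam) (hz : 0 ≤ z) (k n : ℕ) : x (n + k) = (rwStep lam ε z)^[n] (x k) := by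
  induction n with
  | zero => simp
  | succ n ih =>
    rw [iterate_succ_apply', ← ih, Nat.add_right_comm, hiter.eq_rwStep hε hlam hz]

theorem rwStep_zero_of_le (h : z ≤ lam / ε) : rwStep lam ε z 0 = 0 := by
  simp [rwStep, h]

theorem continuous_rwStep (hε : 0 < ε) : Continuous (rwStep lam ε z) :=
  continuous_const.max <| continuous_const.sub <| continuous_const.div
    (continuous_const.add continuous_abs) fun t ↦ by positivity

theorem monotoneOn_rwStep (hε : 0 < ε) (hlam : 0 ≤ lam) :
    MonotoneOn (rwStep lam ε z) (Ici 0) := by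
  intro s (hs : 0 ≤ s) t (ht : 0 ≤ t) hst
  rw [rwStep, rwStep, abs_of_nonneg hs, abs_of_nonneg ht]
  gcongr

theorem rwStep_r2 (hε : 0 < ε) (h : lam < z * ε) : rwStep lam ε z (r2 lam ε z) = r2 lam ε z := by
  have hr := r2_pos h
  have hroot := sub_r2_mul_add_r2 (lam := lam) (ε := ε) (z := z) (by nlinarith [sq_nonneg (z - ε)])
  have hdiv : lam / (ε + r2 lam ε z) = z - r2 lam ε z := by
    rw [div_eq_iff (by positivity), hroot]
  rw [rwStep, abs_of_pos hr, hdiv, sub_sub_cancel, max_eq_right hr.le]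

theorem eq_r2_of_isFixedPt_rwStep (hε : 0 < ε) (h : lam < z * ε) {t : ℝ} (ht : 0 ≤ t)
    (hfix : IsFixedPt (rwStep lam ε z) t) : t = r2 lam ε z := by
  have hfix' : max 0 (z - lam / (ε + t)) = t := by
    simpa only [IsFixedPt, rwStep, abs_of_nonneg ht] using hfix
  have heq : z - lam / (ε + t) = t := by
    rcases ht.eq_or_lt with rfl | htpos
    · rw [add_zero, max_eq_left_iff, sub_nonpos, le_div_iff₀ hε] at hfix'
      linarith
    · exact ((max_choice _ _).resolve_left fun h0 ↦ htpos.ne' (hfix'.symm.trans h0)).symm.trans hfix'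
  refine eq_r2_of_sub_mul_add h ht ?_
  nth_rw 1 [← heq]
  rw [sub_sub_cancel, div_mul_cancel₀ _ (by positivity)]

end RwStep

theorem iterRW_conv_of_zero_general (ε lam z : ℝ) (hε : 0 < ε) (hlam : 0 < lam) (hz : 0 ≤ z)
    (x : ℕ → ℝ) (hiter : IterRW lam ε z x)
    (h0 : ∃ k0 : ℕ, x k0 = 0) :
    (z ≤ lam / ε → Filter.Tendsto x Filter.atTop (nhds 0)) ∧
    (lam / ε < z → Filter.Tendsto x Filter.atTop (nhds (r2 lam ε z))) := by
  obtain ⟨k0, hk0⟩ := h0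
  have horbit : (fun n ↦ x (n + k0)) = fun n ↦ (rwStep lam ε z)^[n] 0 := by
    funext n
    rw [hiter.eq_iterate_rwStep hε hlam.le hz, hk0]
  refine ⟨fun hle ↦ ?_, fun hlt ↦ ?_⟩ <;> rw [← tendsto_add_atTop_iff_nat k0, horbit]
  · simp only [iterate_fixed (rwStep_zero_of_le hle)]
    exact tendsto_const_nhds
  · have h : lam < z * ε := (div_lt_iff₀ hε).1 hlt
    obtain ⟨L, hL, hfix, hlim⟩ := exists_isFixedPt_tendsto_iterate (continuous_rwStep hε)
      ((monotoneOn_rwStep hε hlam.le).mono Icc_subset_Ici_self) (r2_pos h).le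
      (le_max_left _ _) (rwStep_r2 hε h)
    rwa [← eq_r2_of_isFixedPt_rwStep hε h hL.1 hfix]

/-- convergence of the reweighted ℓ₁ sequence when some iterate is 0. -/
theorem iterRW_conv_of_zero (ε lam z : ℝ) (hε : 0 < ε) (hlam : 0 < lam) (hz : 0 ≤ z)
    (x : ℕ → ℝ) (hx0 : 0 ≤ x 0) (hiter : IterRW lam ε z x)
    (h0 : ∃ k0 : ℕ, x k0 = 0) :
    (z ≤ lam / ε → Filter.Tendsto x Filter.atTop (nhds 0)) ∧
    (lam / ε < z → Filter.Tendsto x Filter.atTop (nhds (r2 lam ε z))) :=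
  iterRW_conv_of_zero_general ε lam z hε hlam hz x hiter h0
end

section
/- Let ε > 0 and λ > 0 with 2√λ − ε > 0. Let z ∈ (0, 2√λ − ε), and let the sequence (x^{(k)})_{k≥0} be generated by the reweighted ℓ₁ iteration from any initial guess x^{(0)} ≥ 0. Then the sequence (x^{(k)}) converges to 0. -/
open Real Filter

/-! For `z > 0` the iteration reads `x ↦ max 0 (z - λ / (ε + |x|))`. Since `z - t` and `ε + t`
add up to `z + ε`, their product is at most `(z + ε)² / 4`, so each step lowers `|x|` by at
least `c / (ε + |x|)` with `c = λ - (z + ε)² / 4`, which is positive exactly because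
`z + ε < 2√λ`. The sequence `|x k|` is therefore nonincreasing, the decrements are bounded
below by `c / (ε + |x 0|)`, and the iterates reach `0` after finitely many steps and stay there. -/

theorem sq_div_four_lt_of_lt_two_sqrt {s lam : ℝ} (hs : 0 ≤ s) (h : s < 2 * √lam) :
    s ^ 2 / 4 < lam := by
  have := (Real.lt_sqrt (by positivity)).mp (show s / 2 < √lam by linarith)
  linarith [show (s / 2) ^ 2 = s ^ 2 / 4 by ring]

theorem sub_div_le_sub_sub_sq_div {lam ε z t : ℝ} (ht : 0 < ε + t) :
    z - lam / (ε + t) ≤ t - (lam - (z + ε) ^ 2 / 4) / (ε + t) := by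
  have hamgm : z - t ≤ (z + ε) ^ 2 / 4 / (ε + t) := by
    rw [le_div_iff₀ ht]
    nlinarith [sq_nonneg (z - ε - 2 * t)]
  rw [sub_div]
  linarith

theorem eventually_eq_zero_of_le_max_sub {y : ℕ → ℝ} {δ : ℝ} (hδ : 0 < δ)
    (hy : ∀ k, 0 ≤ y k) (hstep : ∀ k, y (k + 1) ≤ max 0 (y k - δ)) :
    ∀ᶠ k in atTop, y k = 0 := by
  have hbound : ∀ k : ℕ, y k ≤ max 0 (y 0 - k * δ) := by
    intro k
    induction k with
    | zero => simp
    | succ k ih =>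
      calc y (k + 1) ≤ max 0 (y k - δ) := hstep k
        _ ≤ max 0 (max 0 (y 0 - k * δ) - δ) := by gcongr
        _ = max 0 (y 0 - (k + 1 : ℕ) * δ) := by
          push_cast
          rcases le_total (y 0 - k * δ) 0 with h | h
          · rw [max_eq_left h, max_eq_left (by linarith), max_eq_left (by linarith)]
          · rw [max_eq_right h]
            ring_nf
  obtain ⟨N, hN⟩ := exists_nat_ge (y 0 / δ)
  filter_upwards [eventually_ge_atTop N] with k hk
  refine le_antisymm ((hbound k).trans (max_le le_rfl ?_)) (hy k)
  have : y 0 / δ ≤ k := hN.trans (by exact_mod_cast hk)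
  rw [div_le_iff₀ hδ] at this
  linarith

namespace IterRW

variable {lam ε z : ℝ} {x : ℕ → ℝ}

theorem succ_eq_max (hz : 0 < z) (h : IterRW lam ε z x) (k : ℕ) :
    x (k + 1) = max 0 (z - lam / (ε + |x k|)) := by
  rw [h k, abs_of_pos hz]
  split_ifs with hle
  · exact (max_eq_left (sub_nonpos.2 hle)).symm
  · rw [Real.sign_of_pos hz, one_mul, max_eq_right (by linarith)]

theorem abs_succ_le (hε : 0 < ε) (hz : 0 < z) (h : IterRW lam ε z x) (k : ℕ) :
    |x (k + 1)| ≤ max 0 (|x k| - (lam - (z + ε) ^ 2 / 4) / (ε + |x k|)) := by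
  rw [h.succ_eq_max hz, abs_of_nonneg (le_max_left _ _)]
  exact max_le_max le_rfl (sub_div_le_sub_sub_sq_div (by positivity))

end IterRW

theorem iterRW_conv_small_z_general (ε lam z : ℝ) (hε : 0 < ε)
    (hz : z ∈ Set.Ioo (0 : ℝ) (2 * Real.sqrt lam - ε))
    (x : ℕ → ℝ) (hiter : IterRW lam ε z x) :
    Filter.Tendsto x Filter.atTop (nhds 0) := by
  set c := lam - (z + ε) ^ 2 / 4
  have hc : 0 < c :=
    sub_pos.2 (sq_div_four_lt_of_lt_two_sqrt (by linarith [hz.1]) (by linarith [hz.2]))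
  have hstep : ∀ k, |x (k + 1)| ≤ max 0 (|x k| - c / (ε + |x k|)) := hiter.abs_succ_le hε hz.1
  have hanti : Antitone fun k => |x k| := antitone_nat_of_succ_le fun k =>
    (hstep k).trans (max_le (abs_nonneg _) (sub_le_self _ (by positivity)))
  have hdecr : ∀ k, c / (ε + |x 0|) ≤ c / (ε + |x k|) := fun k =>
    div_le_div_of_nonneg_left hc.le (by positivity) (by linarith [hanti k.zero_le])
  have hzero : ∀ᶠ k in atTop, |x k| = 0 :=
    eventually_eq_zero_of_le_max_sub (δ := c / (ε + |x 0|)) (by positivity)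
      (fun k => abs_nonneg _) fun k => (hstep k).trans (max_le_max le_rfl (by linarith [hdecr k]))
  exact tendsto_const_nhds.congr' (hzero.mono fun k hk => (abs_eq_zero.1 hk).symm)

/-- for `0 < z < 2√λ − ε`, the reweighted ℓ₁ sequence converges to 0. -/
theorem iterRW_conv_small_z (ε lam z : ℝ) (hε : 0 < ε) (hlam : 0 < lam)
    (h2 : 0 < 2 * Real.sqrt lam - ε)
    (hz : z ∈ Set.Ioo (0 : ℝ) (2 * Real.sqrt lam - ε))
    (x : ℕ → ℝ) (hx0 : 0 ≤ x 0) (hiter : IterRW lam ε z x) :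
    Filter.Tendsto x Filter.atTop (nhds 0) :=
  iterRW_conv_small_z_general ε lam z hε hz x hiter
end
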